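/- arXiv:2605.26780 — 4 statements merged into one kernel-verified Lean document; each statement's English description precedes it below -/
import Mathlib

section
/- Let real parameters (α, δ, μ, σ, η, λ, ξ, ζ) satisfy η ≥ 0, ξ ≥ 0, λ ≤ 0, ζ = 0, 2α + 4πδ + μ = 0, 2α + σ − 2η ≥ 0, and D := 6πα − πμ + 4πσ + 24πη + 4λ + 4ξ > 0. If p(θ) = a₀ + a₁ cos θ + b₁ sin θ for all θ for some real numbers a₀, a₁, b₁ (K is a disk), then equality holds in the L² stability estimate: ∫₀^{2π} |p(θ) − p_S(θ)|² dθ = (2π/(3D)) · W, and in fact both sides are equal to 0, where W = α∫₀^{2π}ρ(θ)²dθ + δL² + μA + σ|Ã| + η∫₀^{2π}ρ_β(θ)²dθ + λ(ρ_e − ρ_i)² + ξ(ρ_M − ρ_m)² + ζ∫₀^{2π}ρ(θ)⁻¹dθ. -/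
open MeasureTheory

noncomputable section

namespace Stmt6Aux

lemma hd1 (a₀ a₁ b₁ θ : ℝ) : HasDerivAt (fun θ => a₀ + a₁ * Real.cos θ + b₁ * Real.sin θ)
    (-(a₁ * Real.sin θ) + b₁ * Real.cos θ) θ := by
  have h := (((Real.hasDerivAt_cos θ).const_mul a₁).const_add a₀).add
    ((Real.hasDerivAt_sin θ).const_mul b₁)
  exact h.congr_deriv (by ring)

lemma hd2 (a₁ b₁ θ : ℝ) : HasDerivAt (fun θ => -(a₁ * Real.sin θ) + b₁ * Real.cos θ)
    (-(a₁ * Real.cos θ + b₁ * Real.sin θ)) θ := by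
  have h := (((Real.hasDerivAt_sin θ).const_mul a₁).neg).add
    ((Real.hasDerivAt_cos θ).const_mul b₁)
  exact h.congr_deriv (by ring)

lemma hd3 (a₁ b₁ θ : ℝ) : HasDerivAt (fun θ => -(a₁ * Real.cos θ + b₁ * Real.sin θ))
    (a₁ * Real.sin θ - b₁ * Real.cos θ) θ := by
  have h := (((Real.hasDerivAt_cos θ).const_mul a₁).add
    ((Real.hasDerivAt_sin θ).const_mul b₁)).neg
  exact h.congr_deriv (by ring)

lemma deriv_f (a₀ a₁ b₁ : ℝ) : deriv (fun θ => a₀ + a₁ * Real.cos θ + b₁ * Real.sin θ)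
    = fun θ => -(a₁ * Real.sin θ) + b₁ * Real.cos θ :=
  funext fun θ => (hd1 a₀ a₁ b₁ θ).deriv

lemma iter2_f (a₀ a₁ b₁ : ℝ) : iteratedDeriv 2 (fun θ => a₀ + a₁ * Real.cos θ + b₁ * Real.sin θ)
    = fun θ => -(a₁ * Real.cos θ + b₁ * Real.sin θ) := by
  rw [show (2:ℕ) = 1 + 1 from rfl, iteratedDeriv_succ, iteratedDeriv_one, deriv_f]
  exact funext fun θ => (hd2 a₁ b₁ θ).deriv

lemma iter3_f (a₀ a₁ b₁ : ℝ) : iteratedDeriv 3 (fun θ => a₀ + a₁ * Real.cos θ + b₁ * Real.sin θ)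
    = fun θ => a₁ * Real.sin θ - b₁ * Real.cos θ := by
  rw [show (3:ℕ) = 2 + 1 from rfl, iteratedDeriv_succ, iter2_f]
  exact funext fun θ => (hd3 a₁ b₁ θ).deriv

lemma ftc (F f : ℝ → ℝ) (hF : ∀ θ, HasDerivAt F (f θ) θ) (hf : Continuous f) :
    ∫ θ in (0:ℝ)..(2 * Real.pi), f θ = F (2 * Real.pi) - F 0 :=
  intervalIntegral.integral_eq_sub_of_hasDerivAt (fun x _ => hF x)
    (hf.intervalIntegrable _ _)

lemma IA (a₀ a₁ b₁ : ℝ) : ∫ θ in (0:ℝ)..(2 * Real.pi),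
    ((a₀ + a₁ * Real.cos θ + b₁ * Real.sin θ) ^ 2 - (-(a₁ * Real.sin θ) + b₁ * Real.cos θ) ^ 2)
    = 2 * Real.pi * a₀ ^ 2 := by
  have h : ∀ θ : ℝ, HasDerivAt (fun θ => a₀ ^ 2 * θ + 2 * a₀ * (a₁ * Real.sin θ - b₁ * Real.cos θ)
      - (a₁ * Real.cos θ + b₁ * Real.sin θ) * (-(a₁ * Real.sin θ) + b₁ * Real.cos θ))
      ((a₀ + a₁ * Real.cos θ + b₁ * Real.sin θ) ^ 2 - (-(a₁ * Real.sin θ) + b₁ * Real.cos θ) ^ 2) θ := by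
    intro θ
    have h := (((hasDerivAt_id' (𝕜 := ℝ) θ).const_mul (a₀ ^ 2)).add
        ((((Real.hasDerivAt_sin θ).const_mul a₁).sub ((Real.hasDerivAt_cos θ).const_mul b₁)).const_mul (2 * a₀))).sub
      ((((Real.hasDerivAt_cos θ).const_mul a₁).add ((Real.hasDerivAt_sin θ).const_mul b₁)).mul
        ((((Real.hasDerivAt_sin θ).const_mul a₁).neg).add ((Real.hasDerivAt_cos θ).const_mul b₁)))
    exact h.congr_deriv (by simp only [Pi.add_apply, Pi.neg_apply, Pi.sub_apply, Pi.mul_apply]; ring)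
  rw [ftc _ _ h (by continuity)]
  simp [Real.sin_two_pi, Real.cos_two_pi]
  ring

lemma IAt (a₁ b₁ : ℝ) : ∫ θ in (0:ℝ)..(2 * Real.pi),
    ((-(a₁ * Real.sin θ) + b₁ * Real.cos θ) ^ 2 - (-(a₁ * Real.cos θ + b₁ * Real.sin θ)) ^ 2)
    = 0 := by
  have h : ∀ θ : ℝ, HasDerivAt (fun θ => (a₁ * Real.cos θ + b₁ * Real.sin θ) * (-(a₁ * Real.sin θ) + b₁ * Real.cos θ))
      ((-(a₁ * Real.sin θ) + b₁ * Real.cos θ) ^ 2 - (-(a₁ * Real.cos θ + b₁ * Real.sin θ)) ^ 2) θ := by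
    intro θ
    have h := (((Real.hasDerivAt_cos θ).const_mul a₁).add ((Real.hasDerivAt_sin θ).const_mul b₁)).mul
      ((((Real.hasDerivAt_sin θ).const_mul a₁).neg).add ((Real.hasDerivAt_cos θ).const_mul b₁))
    exact h.congr_deriv (by simp only [Pi.add_apply, Pi.neg_apply, Pi.sub_apply, Pi.mul_apply]; ring)
  rw [ftc _ _ h (by continuity)]
  simp [Real.sin_two_pi, Real.cos_two_pi]

lemma Icx (a₀ a₁ b₁ : ℝ) : ∫ θ in (0:ℝ)..(2 * Real.pi),
    (a₀ + a₁ * Real.cos θ + b₁ * Real.sin θ) * Real.cos θ = Real.pi * a₁ := by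
  have h : ∀ θ : ℝ, HasDerivAt (fun θ => a₀ * Real.sin θ + a₁ * (θ / 2 + Real.sin θ * Real.cos θ / 2)
      + b₁ * (Real.sin θ ^ 2 / 2))
      ((a₀ + a₁ * Real.cos θ + b₁ * Real.sin θ) * Real.cos θ) θ := by
    intro θ
    have h := (((Real.hasDerivAt_sin θ).const_mul a₀).add
      ((((hasDerivAt_id' (𝕜 := ℝ) θ).div_const 2).add
        (((Real.hasDerivAt_sin θ).mul (Real.hasDerivAt_cos θ)).div_const 2)).const_mul a₁)).add
      ((((Real.hasDerivAt_sin θ).pow 2).div_const 2).const_mul b₁)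
    refine h.congr_deriv ?_
    push_cast
    linear_combination (-(a₁ / 2)) * Real.sin_sq_add_cos_sq θ
  rw [ftc _ _ h (by continuity)]
  simp [Real.sin_two_pi, Real.cos_two_pi]
  ring

lemma Icy (a₀ a₁ b₁ : ℝ) : ∫ θ in (0:ℝ)..(2 * Real.pi),
    (a₀ + a₁ * Real.cos θ + b₁ * Real.sin θ) * Real.sin θ = Real.pi * b₁ := by
  have h : ∀ θ : ℝ, HasDerivAt (fun θ => -(a₀ * Real.cos θ) + a₁ * (Real.sin θ ^ 2 / 2)
      + b₁ * (θ / 2 - Real.sin θ * Real.cos θ / 2))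
      ((a₀ + a₁ * Real.cos θ + b₁ * Real.sin θ) * Real.sin θ) θ := by
    intro θ
    have h := ((((Real.hasDerivAt_cos θ).const_mul a₀).neg).add
      ((((Real.hasDerivAt_sin θ).pow 2).div_const 2).const_mul a₁)).add
      ((((hasDerivAt_id' (𝕜 := ℝ) θ).div_const 2).sub
        (((Real.hasDerivAt_sin θ).mul (Real.hasDerivAt_cos θ)).div_const 2)).const_mul b₁)
    refine h.congr_deriv ?_
    push_cast
    linear_combination (-(b₁ / 2)) * Real.sin_sq_add_cos_sq θ
  rw [ftc _ _ h (by continuity)]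
  simp [Real.sin_two_pi, Real.cos_two_pi]
  ring

lemma cauchy (u v θ : ℝ) : u * Real.cos θ + v * Real.sin θ ≤ Real.sqrt (u ^ 2 + v ^ 2) := by
  nlinarith [sq_nonneg (u * Real.sin θ - v * Real.cos θ), Real.sin_sq_add_cos_sq θ,
    Real.sq_sqrt (show (0:ℝ) ≤ u ^ 2 + v ^ 2 by positivity),
    Real.sqrt_nonneg (u ^ 2 + v ^ 2)]

lemma reach (u v a₀ : ℝ) (h : ∀ θ : ℝ, u * Real.cos θ + v * Real.sin θ ≤ a₀)
    (ha₀ : 0 < a₀) : Real.sqrt (u ^ 2 + v ^ 2) ≤ a₀ := by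
  rcases eq_or_ne (⟨u, v⟩ : ℂ) 0 with hz | hz
  · have hu : u = 0 := congrArg Complex.re hz
    have hv : v = 0 := congrArg Complex.im hz
    simp [hu, hv, ha₀.le]
  · set z : ℂ := ⟨u, v⟩ with hzdef
    have habs : ‖z‖ = Real.sqrt (u ^ 2 + v ^ 2) := by
      rw [Complex.norm_def, Complex.normSq_apply]
      congr 1
      simp [hzdef]
      ring
    have habs_pos : 0 < ‖z‖ := norm_pos_iff.mpr hz
    have h1 := h (Complex.arg z)
    rw [Complex.cos_arg hz, Complex.sin_arg z] at h1
    have hzre : z.re = u := rfl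
    have hzim : z.im = v := rfl
    rw [hzre, hzim] at h1
    have h2 : u * (u / ‖z‖) + v * (v / ‖z‖) = ‖z‖ := by
      field_simp
      rw [habs, Real.sq_sqrt (by positivity)]
    rw [← habs]
    linarith [h1, h2.symm.le]

lemma radius_le {c1 c2 : EuclideanSpace ℝ (Fin 2)} {r1 r2 : ℝ} (h0 : 0 ≤ r1)
    (h : Metric.closedBall c1 r1 ⊆ Metric.closedBall c2 r2) : r1 ≤ r2 := by
  set u : EuclideanSpace ℝ (Fin 2) := EuclideanSpace.single 0 (1 : ℝ) with hu_def
  have hu : ‖u‖ = 1 := by simp [hu_def, EuclideanSpace.norm_single]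
  have h1 : c1 + r1 • u ∈ Metric.closedBall c1 r1 := by
    simp [Metric.mem_closedBall, dist_eq_norm, norm_smul, hu, abs_of_nonneg h0]
  have h2 : c1 - r1 • u ∈ Metric.closedBall c1 r1 := by
    simp [Metric.mem_closedBall, dist_eq_norm, norm_smul, hu, abs_of_nonneg h0]
  have d12 : dist (c1 + r1 • u) (c1 - r1 • u) = 2 * r1 := by
    rw [dist_eq_norm]
    have he : (c1 + r1 • u) - (c1 - r1 • u) = (2 * r1) • u := by module
    rw [he, norm_smul, hu, Real.norm_eq_abs, abs_of_nonneg (by linarith)]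
    ring
  have t := dist_triangle (c1 + r1 • u) c2 (c1 - r1 • u)
  have e1 := h h1
  have e2 := h h2
  rw [Metric.mem_closedBall] at e1 e2
  rw [dist_comm c2 (c1 - r1 • u)] at t
  linarith [d12 ▸ t]

lemma circ (c : EuclideanSpace ℝ (Fin 2)) (a₀ : ℝ) (ha₀ : 0 < a₀) :
    sInf {r : ℝ | 0 ≤ r ∧ ∃ c', Metric.closedBall c a₀ ⊆ Metric.closedBall c' r} = a₀ := by
  have hmem : a₀ ∈ {r : ℝ | 0 ≤ r ∧ ∃ c', Metric.closedBall c a₀ ⊆ Metric.closedBall c' r} :=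
    ⟨ha₀.le, c, subset_rfl⟩
  refine le_antisymm (csInf_le ⟨0, fun r hr => hr.1⟩ hmem) (le_csInf ⟨a₀, hmem⟩ ?_)
  rintro r ⟨hr0, c', hsub⟩
  exact radius_le ha₀.le hsub

lemma inr (c : EuclideanSpace ℝ (Fin 2)) (a₀ : ℝ) (ha₀ : 0 < a₀) :
    sSup {r : ℝ | 0 ≤ r ∧ ∃ c', Metric.closedBall c' r ⊆ Metric.closedBall c a₀} = a₀ := by
  have hmem : a₀ ∈ {r : ℝ | 0 ≤ r ∧ ∃ c', Metric.closedBall c' r ⊆ Metric.closedBall c a₀} :=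
    ⟨ha₀.le, c, subset_rfl⟩
  have hub : ∀ r ∈ {r : ℝ | 0 ≤ r ∧ ∃ c', Metric.closedBall c' r ⊆ Metric.closedBall c a₀}, r ≤ a₀ := by
    rintro r ⟨hr0, c', hsub⟩
    exact radius_le hr0 hsub
  exact le_antisymm (csSup_le ⟨a₀, hmem⟩ hub) (le_csSup ⟨a₀, hub⟩ hmem)

lemma Kball (a₀ a₁ b₁ : ℝ) (ha₀ : 0 < a₀) (c : EuclideanSpace ℝ (Fin 2))
    (hc0 : c 0 = a₁) (hc1 : c 1 = b₁) :
    {x : EuclideanSpace ℝ (Fin 2) | ∀ θ : ℝ,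
        x 0 * Real.cos θ + x 1 * Real.sin θ ≤ a₀ + a₁ * Real.cos θ + b₁ * Real.sin θ}
      = Metric.closedBall c a₀ := by
  ext x
  simp only [Set.mem_setOf_eq, Metric.mem_closedBall]
  rw [EuclideanSpace.dist_eq, Fin.sum_univ_two, hc0, hc1]
  simp only [Real.dist_eq, sq_abs]
  constructor
  · intro h
    apply reach _ _ _ _ ha₀
    intro θ
    linarith [h θ]
  · intro h θ
    have := cauchy (x 0 - a₁) (x 1 - b₁) θ
    nlinarith [this, h]

end Stmt6Aux

set_option maxHeartbeats 1000000 in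
theorem stmt6
    (p : ℝ → ℝ)
    (hp : ContDiff ℝ (⊤ : ℕ∞) p)
    (hper : ∀ θ : ℝ, p (θ + 2 * Real.pi) = p θ)
    (ρ : ℝ → ℝ)
    (hρdef : ρ = fun θ => p θ + iteratedDeriv 2 p θ)
    (hρpos : ∀ θ : ℝ, 0 < ρ θ)
    (L A : ℝ)
    (hL : L = ∫ θ in (0:ℝ)..(2 * Real.pi), ρ θ)
    (hA : A = (1 / 2) * ∫ θ in (0:ℝ)..(2 * Real.pi), (p θ ^ 2 - deriv p θ ^ 2))
    (Atilde : ℝ)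
    (hAt : Atilde = (1 / 2) * ∫ θ in (0:ℝ)..(2 * Real.pi), (deriv p θ ^ 2 - iteratedDeriv 2 p θ ^ 2))
    (ρβ : ℝ → ℝ)
    (hρβ : ρβ = fun θ => |deriv p θ + iteratedDeriv 3 p θ|)
    (ρM ρm : ℝ)
    (hρM : ρM = sSup (ρ '' Set.Icc (0:ℝ) (2 * Real.pi)))
    (hρm : ρm = sInf (ρ '' Set.Icc (0:ℝ) (2 * Real.pi)))
    (K : Set (EuclideanSpace ℝ (Fin 2)))
    (hK : K = {x | ∀ θ : ℝ, x 0 * Real.cos θ + x 1 * Real.sin θ ≤ p θ})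
    (ρe ρi : ℝ)
    (hρe : ρe = sInf {r : ℝ | 0 ≤ r ∧ ∃ c, K ⊆ Metric.closedBall c r})
    (hρi : ρi = sSup {r : ℝ | 0 ≤ r ∧ ∃ c, Metric.closedBall c r ⊆ K})
    (cx cy : ℝ)
    (hcx : cx = (1 / Real.pi) * ∫ θ in (0:ℝ)..(2 * Real.pi), p θ * Real.cos θ)
    (hcy : cy = (1 / Real.pi) * ∫ θ in (0:ℝ)..(2 * Real.pi), p θ * Real.sin θ)
    (pS : ℝ → ℝ)
    (hpS : pS = fun θ => L / (2 * Real.pi) + cx * Real.cos θ + cy * Real.sin θ)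
    (α δ μ σ η lam ξ ζ : ℝ)
    (W : ℝ)
    (hW : W = α * (∫ θ in (0:ℝ)..(2 * Real.pi), ρ θ ^ 2) + δ * L ^ 2 + μ * A + σ * |Atilde|
      + η * (∫ θ in (0:ℝ)..(2 * Real.pi), ρβ θ ^ 2) + lam * (ρe - ρi) ^ 2
      + ξ * (ρM - ρm) ^ 2 + ζ * (∫ θ in (0:ℝ)..(2 * Real.pi), (ρ θ)⁻¹))
    (hη : 0 ≤ η) (hξ : 0 ≤ ξ) (hlam : lam ≤ 0) (hζ : ζ = 0)
    (hc1 : 2 * α + 4 * Real.pi * δ + μ = 0)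
    (hc2 : 0 ≤ 2 * α + σ - 2 * η)
    (hD : 0 < (6 * Real.pi * α - Real.pi * μ + 4 * Real.pi * σ + 24 * Real.pi * η + 4 * lam + 4 * ξ))
    (hdisk : ∃ a₀ a₁ b₁ : ℝ, ∀ θ : ℝ, p θ = a₀ + a₁ * Real.cos θ + b₁ * Real.sin θ) :
    (∫ θ in (0:ℝ)..(2 * Real.pi), |p θ - pS θ| ^ 2)
        = (2 * Real.pi / (3 * (6 * Real.pi * α - Real.pi * μ + 4 * Real.pi * σ + 24 * Real.pi * η + 4 * lam + 4 * ξ))) * W ∧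
      (∫ θ in (0:ℝ)..(2 * Real.pi), |p θ - pS θ| ^ 2) = 0 ∧
      (2 * Real.pi / (3 * (6 * Real.pi * α - Real.pi * μ + 4 * Real.pi * σ + 24 * Real.pi * η + 4 * lam + 4 * ξ))) * W = 0 := by
  obtain ⟨a₀, a₁, b₁, hpf⟩ := hdisk
  have hpfun : p = fun θ => a₀ + a₁ * Real.cos θ + b₁ * Real.sin θ := funext hpf
  subst hpfun
  have hpi := Real.pi_pos
  -- ρ is constant a₀
  have hρa : ρ = fun _ => a₀ := by
    funext θ
    rw [hρdef]
    simp only [Stmt6Aux.iter2_f]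
    ring
  have ha₀ : 0 < a₀ := by
    have := hρpos 0
    rw [hρa] at this
    exact this
  -- basic integrals
  have hLv : L = 2 * Real.pi * a₀ := by
    rw [hL, hρa, intervalIntegral.integral_const, smul_eq_mul]
    ring
  have hI2 : (∫ θ in (0:ℝ)..(2 * Real.pi), ρ θ ^ 2) = 2 * Real.pi * a₀ ^ 2 := by
    rw [hρa]
    rw [intervalIntegral.integral_const, smul_eq_mul]
    ring
  have hAv : A = Real.pi * a₀ ^ 2 := by
    rw [hA]
    simp only [Stmt6Aux.deriv_f]
    rw [Stmt6Aux.IA]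
    ring
  have hAtv : Atilde = 0 := by
    rw [hAt]
    simp only [Stmt6Aux.deriv_f, Stmt6Aux.iter2_f]
    rw [Stmt6Aux.IAt]
    ring
  have hρβ0 : ρβ = fun _ => (0:ℝ) := by
    funext θ
    rw [hρβ]
    simp only [Stmt6Aux.deriv_f, Stmt6Aux.iter3_f]
    rw [show -(a₁ * Real.sin θ) + b₁ * Real.cos θ + (a₁ * Real.sin θ - b₁ * Real.cos θ) = 0 by ring,
      abs_zero]
  have hIβ : (∫ θ in (0:ℝ)..(2 * Real.pi), ρβ θ ^ 2) = 0 := by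
    rw [hρβ0]
    simp
  -- Steiner point
  have hcxv : cx = a₁ := by
    rw [hcx]
    simp only [Stmt6Aux.Icx]
    field_simp
  have hcyv : cy = b₁ := by
    rw [hcy]
    simp only [Stmt6Aux.Icy]
    field_simp
  have hpSv : pS = fun θ => a₀ + a₁ * Real.cos θ + b₁ * Real.sin θ := by
    rw [hpS, hLv, hcxv, hcyv]
    funext θ
    field_simp
  have hLHS : (∫ θ in (0:ℝ)..(2 * Real.pi), |(fun θ => a₀ + a₁ * Real.cos θ + b₁ * Real.sin θ) θ - pS θ| ^ 2) = 0 := by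
    rw [hpSv]
    simp
  -- ρM, ρm
  have himg : ρ '' Set.Icc (0:ℝ) (2 * Real.pi) = {a₀} := by
    rw [hρa]
    exact Set.Nonempty.image_const ⟨0, Set.left_mem_Icc.mpr (by positivity)⟩ _
  have hρMv : ρM = a₀ := by rw [hρM, himg, csSup_singleton]
  have hρmv : ρm = a₀ := by rw [hρm, himg, csInf_singleton]
  -- circumradius and inradius
  set c : EuclideanSpace ℝ (Fin 2) := (WithLp.equiv 2 (Fin 2 → ℝ)).symm ![a₁, b₁] with hc_def
  have hc0 : c 0 = a₁ := rfl
  have hc1' : c 1 = b₁ := rfl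
  have hKc : K = Metric.closedBall c a₀ := by
    rw [hK]
    exact Stmt6Aux.Kball a₀ a₁ b₁ ha₀ c hc0 hc1'
  have hρev : ρe = a₀ := by
    rw [hρe, hKc]
    exact Stmt6Aux.circ c a₀ ha₀
  have hρiv : ρi = a₀ := by
    rw [hρi, hKc]
    exact Stmt6Aux.inr c a₀ ha₀
  -- W = 0
  have hWv : W = 0 := by
    rw [hW, hζ, hAtv, hIβ, hI2, hLv, hAv, hρev, hρiv, hρMv, hρmv]
    simp only [abs_zero, sub_self, mul_zero, zero_mul, ne_eq, zero_pow, add_zero, mul_zero]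
    linear_combination (Real.pi * a₀ ^ 2) * hc1
  refine ⟨?_, hLHS, ?_⟩
  · rw [hWv, mul_zero]
    exact hLHS
  · rw [hWv, mul_zero]
end
end

section
/- One has Ã ≤ 0, the family n ↦ n²(n² − 1)(aₙ² + bₙ²) is summable over integers n ≥ 2, and |Ã| = (π/2)·∑_{n=2}^{∞} n²(n² − 1)(aₙ² + bₙ²). -/
open MeasureTheory Set AddCircle

noncomputable section

private def myc (f : ℝ → ℝ) (n : ℤ) : ℂ :=
  fourierCoeffOn (by linarith [Real.two_pi_pos] : (0:ℝ) < 0 + 2 * Real.pi) (fun x => (f x : ℂ)) n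

private lemma parseval_aux (f : ℝ → ℝ) (hc : Continuous f)
    (hper : Function.Periodic f (2 * Real.pi)) :
    HasSum (fun n : ℤ => ‖myc f n‖ ^ 2)
      ((1 / (2 * Real.pi)) * ∫ x in (0:ℝ)..(2 * Real.pi), f x ^ 2) := by
  haveI : Fact (0 < 2 * Real.pi) := ⟨Real.two_pi_pos⟩
  set fC : ℝ → ℂ := fun x => (f x : ℂ) with hfC
  have hcC : Continuous fC := Complex.continuous_ofReal.comp hc
  have hend : fC 0 = fC (0 + 2 * Real.pi) := by
    have h0 := hper 0
    rw [zero_add] at h0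
    simp only [hfC, zero_add, h0]
  set G : C(AddCircle (2 * Real.pi), ℂ) :=
    ⟨AddCircle.liftIco (2 * Real.pi) 0 fC,
      AddCircle.liftIco_continuous hend hcC.continuousOn⟩ with hG
  set F := ContinuousMap.toLp (E := ℂ) 2 haarAddCircle ℂ G with hF
  have h1 : ∀ n, fourierCoeff ((F : Lp ℂ 2 haarAddCircle) : AddCircle (2 * Real.pi) → ℂ) n
      = myc f n := by
    intro n
    rw [hF, fourierCoeff_toLp]
    exact fourierCoeff_liftIco_eq fC n
  have hsumm : Summable (fun n : ℤ =>
      ‖fourierCoeff ((F : Lp ℂ 2 haarAddCircle) : AddCircle (2 * Real.pi) → ℂ) n‖ ^ 2) := by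
    have hs0 := (lp.memℓp (fourierBasis.repr F)).summable
      (by norm_num : (0:ℝ) < (2 : ENNReal).toReal)
    have he : ∀ i : ℤ, ‖fourierBasis.repr F i‖ ^ ((2 : ENNReal).toReal)
        = ‖fourierCoeff ((F : Lp ℂ 2 haarAddCircle) : AddCircle (2 * Real.pi) → ℂ) i‖ ^ 2 := by
      intro i
      rw [fourierBasis_repr]
      norm_num
    exact (summable_congr he).mp hs0
  have ht := tsum_sq_fourierCoeff F
  have hR : (∫ t : AddCircle (2 * Real.pi), ‖(F : AddCircle (2 * Real.pi) → ℂ) t‖ ^ 2 ∂haarAddCircle)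
      = (1 / (2 * Real.pi)) * ∫ x in (0:ℝ)..(2 * Real.pi), f x ^ 2 := by
    have hae : (fun t => ‖(F : AddCircle (2 * Real.pi) → ℂ) t‖ ^ 2)
        =ᵐ[haarAddCircle] (fun t => ‖(G : AddCircle (2 * Real.pi) → ℂ) t‖ ^ 2) := by
      filter_upwards [ContinuousMap.coeFn_toLp (E := ℂ) (p := 2) (𝕜 := ℂ) haarAddCircle G] with t ht
      rw [ht]
    rw [integral_congr_ae hae]
    have hv : (∫ t : AddCircle (2 * Real.pi), ‖G t‖ ^ 2 ∂(volume : Measure (AddCircle (2 * Real.pi))))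
        = (2 * Real.pi) * ∫ t : AddCircle (2 * Real.pi), ‖G t‖ ^ 2 ∂haarAddCircle := by
      rw [volume_eq_smul_haarAddCircle, MeasureTheory.integral_smul_measure,
        ENNReal.toReal_ofReal Real.two_pi_pos.le, smul_eq_mul]
    have hiv : (∫ x in (0:ℝ)..(0 + 2 * Real.pi), ‖G (x : AddCircle (2 * Real.pi))‖ ^ 2)
        = ∫ t : AddCircle (2 * Real.pi), ‖G t‖ ^ 2 ∂(volume : Measure (AddCircle (2 * Real.pi))) :=
      AddCircle.intervalIntegral_preimage (2 * Real.pi) 0 (fun t => ‖G t‖ ^ 2)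
    have hagree : (∫ x in (0:ℝ)..(0 + 2 * Real.pi), ‖G (x : AddCircle (2 * Real.pi))‖ ^ 2)
        = ∫ x in (0:ℝ)..(2 * Real.pi), f x ^ 2 := by
      rw [zero_add]
      refine intervalIntegral.integral_congr_ae ?_
      filter_upwards [compl_mem_ae_iff.mpr
        (measure_singleton (2 * Real.pi) : volume {2 * Real.pi} = 0)] with x hx hxu
      rw [Set.uIoc_of_le Real.two_pi_pos.le] at hxu
      have hmem : x ∈ Set.Ico (0:ℝ) (0 + 2 * Real.pi) :=
        ⟨hxu.1.le, by rw [zero_add]; exact lt_of_le_of_ne hxu.2 hx⟩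
      have : G (x : AddCircle (2 * Real.pi)) = fC x := by
        show AddCircle.liftIco (2 * Real.pi) 0 fC (x : AddCircle (2 * Real.pi)) = fC x
        exact AddCircle.liftIco_coe_apply hmem
      rw [this]
      simp [hfC, sq_abs]
    have : (1 / (2 * Real.pi)) * ∫ x in (0:ℝ)..(2 * Real.pi), f x ^ 2
        = (1 / (2 * Real.pi)) * ((2 * Real.pi) *
          ∫ t : AddCircle (2 * Real.pi), ‖G t‖ ^ 2 ∂haarAddCircle) := by
      rw [← hv, ← hiv, hagree]
    rw [this]
    field_simp
  have := hsumm.hasSum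
  rw [ht, hR] at this
  exact HasSum.congr_fun this (fun n => by rw [h1 n])

private lemma coeff_deriv_aux (f : ℝ → ℝ) (hdiff : Differentiable ℝ f)
    (hd' : Continuous (deriv f))
    (hper : Function.Periodic f (2 * Real.pi)) (n : ℤ) :
    myc (deriv f) n = Complex.I * n * myc f n := by
  haveI : Fact (0 < 2 * Real.pi) := ⟨Real.two_pi_pos⟩
  have hend : f (0 + 2 * Real.pi) = f 0 := by simpa using hper 0
  have hab : (0:ℝ) < 0 + 2 * Real.pi := by linarith [Real.two_pi_pos]
  by_cases hn : n = 0
  · subst hn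
    rw [myc, fourierCoeffOn_eq_integral]
    simp only [Int.cast_zero, mul_zero, zero_mul, neg_zero, fourier_zero, one_smul]
    rw [intervalIntegral.integral_ofReal, intervalIntegral.integral_deriv_eq_sub
      (fun x _ => hdiff x) (hd'.intervalIntegrable _ _), hend]
    simp
  · have key := fourierCoeffOn_of_hasDerivAt hab hn
      (f := fun x => (Complex.ofReal (f x))) (f' := fun x => (Complex.ofReal (deriv f x)))
      (fun x _ => ((hdiff x).hasDerivAt).ofReal_comp)
      ((Complex.continuous_ofReal.comp hd').intervalIntegrable _ _)
    have hz : ((f (0 + 2*Real.pi) : ℂ)) - ((f 0 : ℂ)) = 0 := by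
      rw [hend]; ring
    rw [hz, mul_zero, zero_sub] at key
    have hn' : (n:ℂ) ≠ 0 := Int.cast_ne_zero.mpr hn
    have hπ : (Real.pi : ℂ) ≠ 0 := Complex.ofReal_ne_zero.mpr Real.pi_ne_zero
    have h2 : fourierCoeffOn hab (fun x => Complex.ofReal (deriv f x)) n
        = Complex.I * n * fourierCoeffOn hab (fun x => Complex.ofReal (f x)) n := by
      rw [key]
      push_cast
      field_simp
      ring_nf
    exact h2

private lemma myc_eq_aux (f : ℝ → ℝ) (hc : Continuous f) (n : ℤ) :
    myc f n = (1/(2*Real.pi) : ℂ) *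
      (Complex.ofReal (∫ x in (0:ℝ)..(2*Real.pi), f x * Real.cos (n*x)) -
       Complex.I * Complex.ofReal (∫ x in (0:ℝ)..(2*Real.pi), f x * Real.sin (n*x))) := by
  haveI : Fact (0 < 2 * Real.pi) := ⟨Real.two_pi_pos⟩
  have hab : (0:ℝ) < 0 + 2 * Real.pi := by linarith [Real.two_pi_pos]
  have key : ∀ x : ℝ, (fourier (-n) (x : AddCircle (0 + 2*Real.pi - 0)) : ℂ) • (Complex.ofReal (f x))
      = Complex.ofReal (f x * Real.cos (n*x)) - Complex.I * Complex.ofReal (f x * Real.sin (n*x)) := by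
    intro x
    rw [smul_eq_mul, fourier_coe_apply]
    have harg : 2 * (Real.pi:ℂ) * Complex.I * ((-n : ℤ):ℂ) * (x:ℂ) / ((0 + 2 * Real.pi - 0 : ℝ):ℂ)
        = ((-((n:ℝ) * x) : ℝ) : ℂ) * Complex.I := by
      have hπ : (Real.pi : ℂ) ≠ 0 := Complex.ofReal_ne_zero.mpr Real.pi_ne_zero
      push_cast
      field_simp
      ring
    rw [harg, Complex.exp_mul_I, ← Complex.ofReal_cos, ← Complex.ofReal_sin,
      Real.cos_neg, Real.sin_neg]
    push_cast
    ring
  have h2 : myc f n = (1 / (0 + 2*Real.pi - 0) : ℝ) •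
      ∫ x in (0:ℝ)..(0 + 2*Real.pi), (Complex.ofReal (f x * Real.cos (n*x)) -
        Complex.I * Complex.ofReal (f x * Real.sin (n*x))) := by
    rw [myc, fourierCoeffOn_eq_integral]
    congr 1
    exact intervalIntegral.integral_congr (fun x _ => key x)
  rw [h2]
  have hcos : Continuous fun x : ℝ => Complex.ofReal (f x * Real.cos (n*x)) :=
    Complex.continuous_ofReal.comp (hc.mul (Real.continuous_cos.comp (by fun_prop)))
  have hsin : Continuous fun x : ℝ => Complex.ofReal (f x * Real.sin (n*x)) :=
    Complex.continuous_ofReal.comp (hc.mul (Real.continuous_sin.comp (by fun_prop)))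
  rw [intervalIntegral.integral_sub (hcos.intervalIntegrable _ _)
    ((show Continuous fun x : ℝ => Complex.I * Complex.ofReal (f x * Real.sin (n*x)) from continuous_const.mul hsin).intervalIntegrable _ _),
    intervalIntegral.integral_const_mul, intervalIntegral.integral_ofReal,
    intervalIntegral.integral_ofReal]
  rw [zero_add, sub_zero] at *
  rw [Complex.real_smul]
  push_cast
  ring

private lemma norm_myc_aux (f : ℝ → ℝ) (hc : Continuous f) (n : ℤ) :
    ‖myc f n‖ ^ 2 = (1/(2*Real.pi))^2 *
      ((∫ x in (0:ℝ)..(2*Real.pi), f x * Real.cos (n*x))^2 +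
       (∫ x in (0:ℝ)..(2*Real.pi), f x * Real.sin (n*x))^2) := by
  rw [myc_eq_aux f hc n]
  set A := ∫ x in (0:ℝ)..(2*Real.pi), f x * Real.cos (n*x)
  set B := ∫ x in (0:ℝ)..(2*Real.pi), f x * Real.sin (n*x)
  rw [norm_mul, mul_pow]
  have h1 : ‖(1/(2*Real.pi) : ℂ)‖ = 1/(2*Real.pi) := by
    rw [show (1/(2*Real.pi) : ℂ) = ((1/(2*Real.pi) : ℝ) : ℂ) by push_cast; ring,
      Complex.norm_real]
    exact abs_of_pos (by positivity)
  have h2 : ‖Complex.ofReal A - Complex.I * Complex.ofReal B‖ ^ 2 = A^2 + B^2 := by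
    rw [Complex.sq_norm, Complex.normSq_apply]
    simp
    ring
  rw [h1, h2]

theorem stmt11
    (p : ℝ → ℝ)
    (hp : ContDiff ℝ (⊤ : ℕ∞) p)
    (hper : ∀ θ : ℝ, p (θ + 2 * Real.pi) = p θ)
    (ρ : ℝ → ℝ)
    (hρdef : ρ = fun θ => p θ + iteratedDeriv 2 p θ)
    (hρpos : ∀ θ : ℝ, 0 < ρ θ)
    (Atilde : ℝ)
    (hAt : Atilde = (1 / 2) * ∫ θ in (0:ℝ)..(2 * Real.pi), (deriv p θ ^ 2 - iteratedDeriv 2 p θ ^ 2))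
    (a b : ℕ → ℝ)
    (ha0 : a 0 = (1 / (2 * Real.pi)) * ∫ θ in (0:ℝ)..(2 * Real.pi), p θ)
    (ha : ∀ n : ℕ, 1 ≤ n → a n = (1 / Real.pi) * ∫ θ in (0:ℝ)..(2 * Real.pi), p θ * Real.cos (n * θ))
    (hb : ∀ n : ℕ, 1 ≤ n → b n = (1 / Real.pi) * ∫ θ in (0:ℝ)..(2 * Real.pi), p θ * Real.sin (n * θ))
    :
    Atilde ≤ 0 ∧
      Summable (fun n : ℕ => ((n:ℝ) + 2) ^ 2 * (((n:ℝ) + 2) ^ 2 - 1) * (a (n + 2) ^ 2 + b (n + 2) ^ 2)) ∧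
      |Atilde| = (Real.pi / 2)
          * ∑' n : ℕ, ((n:ℝ) + 2) ^ 2 * (((n:ℝ) + 2) ^ 2 - 1) * (a (n + 2) ^ 2 + b (n + 2) ^ 2) := by
  haveI : Fact (0 < 2 * Real.pi) := ⟨Real.two_pi_pos⟩
  have hper' : Function.Periodic p (2 * Real.pi) := hper
  have hone : (1 : WithTop ℕ∞) ≤ (((⊤:ℕ∞)) : WithTop ℕ∞) := by
    exact_mod_cast (le_top : (1:ℕ∞) ≤ ⊤)
  have hpi : ContDiff ℝ (((⊤:ℕ∞)) : WithTop ℕ∞) p := hp.of_le (by simp)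
  have hd1 : Differentiable ℝ p := hpi.differentiable (by simp)
  have hp' : ContDiff ℝ (((⊤:ℕ∞)) : WithTop ℕ∞) (deriv p) := (contDiff_infty_iff_deriv.mp hpi).2
  have hd2 : Differentiable ℝ (deriv p) := hp'.differentiable (by simp)
  have hc1 : Continuous (deriv p) := hp'.continuous
  have hp'' : ContDiff ℝ (((⊤:ℕ∞)) : WithTop ℕ∞) (deriv (deriv p)) := (contDiff_infty_iff_deriv.mp hp').2
  have hc2 : Continuous (deriv (deriv p)) := hp''.continuous
  have hcp : Continuous p := hp.continuous
  have hperd : Function.Periodic (deriv p) (2 * Real.pi) := by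
    intro x
    have hfun : (fun y => p (y + 2 * Real.pi)) = p := funext hper
    have h := deriv_comp_add_const (f := p) (a := 2 * Real.pi) (x := x)
    rw [hfun] at h
    exact h.symm
  have hperd2 : Function.Periodic (deriv (deriv p)) (2 * Real.pi) := by
    intro x
    have hfun : (fun y => deriv p (y + 2 * Real.pi)) = deriv p := funext hperd
    have h := deriv_comp_add_const (f := deriv p) (a := 2 * Real.pi) (x := x)
    rw [hfun] at h
    exact h.symm
  set I2 := ∫ x in (0:ℝ)..(2*Real.pi), deriv p x ^ 2 with hI2
  set I4 := ∫ x in (0:ℝ)..(2*Real.pi), deriv (deriv p) x ^ 2 with hI4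
  have hcastsq : ∀ n : ℤ, ‖((n:ℤ):ℂ)‖^2 = (n:ℝ)^2 := by
    intro n
    rw [Complex.sq_norm, Complex.normSq_apply]
    simp
    push_cast
    ring
  have hP1 : HasSum (fun n : ℤ => (n:ℝ)^2 * ‖myc p n‖^2) ((1/(2*Real.pi)) * I2) := by
    refine HasSum.congr_fun (parseval_aux (deriv p) hc1 hperd) ?_
    intro n
    rw [coeff_deriv_aux p hd1 hc1 hper' n, norm_mul, norm_mul, Complex.norm_I, one_mul,
      mul_pow, hcastsq n]

  have hP2 : HasSum (fun n : ℤ => (n:ℝ)^2 * ((n:ℝ)^2 * ‖myc p n‖^2)) ((1/(2*Real.pi)) * I4) := by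
    refine HasSum.congr_fun (parseval_aux (deriv (deriv p)) hc2 hperd2) ?_
    intro n
    rw [coeff_deriv_aux (deriv p) hd2 hc2 hperd n, coeff_deriv_aux p hd1 hc1 hper' n]
    rw [norm_mul, norm_mul, norm_mul, norm_mul, Complex.norm_I, one_mul]
    rw [mul_pow, mul_pow, hcastsq n]
  set Dz : ℤ → ℝ := fun m => ((m:ℝ)^4 - (m:ℝ)^2) * ‖myc p m‖^2 with hDz
  have hD : HasSum Dz ((1/(2*Real.pi))*I4 - (1/(2*Real.pi))*I2) := by
    refine HasSum.congr_fun (hP2.sub hP1) ?_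
    intro n
    simp only [hDz]
    ring
  have hE := hD.nat_add_neg
  have hDz0 : Dz 0 = 0 := by simp [hDz]
  rw [hDz0, add_zero] at hE
  have hshift := (hasSum_nat_add_iff' 2).mpr hE
  have hrange : (∑ i ∈ Finset.range 2, (Dz (i:ℤ) + Dz (-(i:ℤ)))) = 0 := by
    rw [Finset.sum_range_succ, Finset.sum_range_one]
    norm_num [hDz]
  rw [hrange, sub_zero] at hshift
  have hterm : ∀ n : ℕ, ((n:ℝ)+2)^2*(((n:ℝ)+2)^2-1)*(a (n+2)^2 + b (n+2)^2)
      = 2 * (Dz (((n+2:ℕ):ℤ)) + Dz (-((n+2:ℕ):ℤ))) := by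
    intro n
    have hm1 : (1:ℕ) ≤ n + 2 := by omega
    have haA := ha (n+2) hm1
    have hbB := hb (n+2) hm1
    have h1 := norm_myc_aux p hcp (((n+2:ℕ):ℤ))
    have h2 := norm_myc_aux p hcp (-((n+2:ℕ):ℤ))
    push_cast at h1 h2 haA hbB ⊢
    simp only [neg_mul, Real.cos_neg, Real.sin_neg, mul_neg,
      intervalIntegral.integral_neg, neg_sq] at h2
    simp only [hDz]
    push_cast
    rw [h1, h2, haA, hbB]
    have hπ : Real.pi ≠ 0 := Real.pi_ne_zero
    field_simp
    ring
  have ht : HasSum (fun n : ℕ =>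
      ((n:ℝ)+2)^2*(((n:ℝ)+2)^2-1)*(a (n+2)^2 + b (n+2)^2))
      (2 * ((1/(2*Real.pi))*I4 - (1/(2*Real.pi))*I2)) := by
    refine HasSum.congr_fun (hshift.mul_left 2) ?_
    intro n
    exact hterm n
  have htnn : ∀ n : ℕ, 0 ≤ ((n:ℝ)+2)^2*(((n:ℝ)+2)^2-1)*(a (n+2)^2 + b (n+2)^2) := by
    intro n
    have h0 : (0:ℝ) ≤ (n:ℝ) := Nat.cast_nonneg n
    have h1 : (1:ℝ) ≤ ((n:ℝ)+2)^2 := by nlinarith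
    exact mul_nonneg (mul_nonneg (sq_nonneg _) (by linarith)) (by positivity)
  have hTnn : 0 ≤ 2 * ((1/(2*Real.pi))*I4 - (1/(2*Real.pi))*I2) := ht.nonneg htnn
  have hit : iteratedDeriv 2 p = deriv (deriv p) := by
    rw [iteratedDeriv_succ, iteratedDeriv_one]
  rw [hit] at hAt
  have hintsub : (∫ θ in (0:ℝ)..(2*Real.pi), (deriv p θ^2 - deriv (deriv p) θ^2)) = I2 - I4 :=
    intervalIntegral.integral_sub ((hc1.pow 2).intervalIntegrable _ _)
      ((hc2.pow 2).intervalIntegrable _ _)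
  rw [hintsub] at hAt
  have hπpos : (0:ℝ) < Real.pi := Real.pi_pos
  have hkey : I2 ≤ I4 := by
    have h5 : (1/(2*Real.pi))*I2 ≤ (1/(2*Real.pi))*I4 := by linarith
    have h6 : (0:ℝ) < 1/(2*Real.pi) := by positivity
    exact (mul_le_mul_iff_right₀ h6).mp h5
  have hA_le : Atilde ≤ 0 := by rw [hAt]; linarith
  refine ⟨hA_le, ht.summable, ?_⟩
  rw [abs_of_nonpos hA_le, hAt, ht.tsum_eq]
  field_simp
  ring
end
end

section
/- One has ∫₀^{2π} ρ(θ)⁻¹ dθ ≥ 3L − 4A − 4|Ã| (this integral equals the total squared curvature ∮κ² ds of the curve). Moreover, if equality holds, then K is a disk, i.e. there exist real numbers a₀, a₁, b₁ with p(θ) = a₀ + a₁ cos θ + b₁ sin θ for all θ. -/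
open MeasureTheory

noncomputable section

theorem stmt13
    (p : ℝ → ℝ)
    (hp : ContDiff ℝ (⊤ : ℕ∞) p)
    (hper : ∀ θ : ℝ, p (θ + 2 * Real.pi) = p θ)
    (ρ : ℝ → ℝ)
    (hρdef : ρ = fun θ => p θ + iteratedDeriv 2 p θ)
    (hρpos : ∀ θ : ℝ, 0 < ρ θ)
    (L A : ℝ)
    (hL : L = ∫ θ in (0:ℝ)..(2 * Real.pi), ρ θ)
    (hA : A = (1 / 2) * ∫ θ in (0:ℝ)..(2 * Real.pi), (p θ ^ 2 - deriv p θ ^ 2))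
    (Atilde : ℝ)
    (hAt : Atilde = (1 / 2) * ∫ θ in (0:ℝ)..(2 * Real.pi), (deriv p θ ^ 2 - iteratedDeriv 2 p θ ^ 2))
    :
    3 * L - 4 * A - 4 * |Atilde| ≤ (∫ θ in (0:ℝ)..(2 * Real.pi), (ρ θ)⁻¹) ∧
      ((∫ θ in (0:ℝ)..(2 * Real.pi), (ρ θ)⁻¹) = 3 * L - 4 * A - 4 * |Atilde| →
        ∃ a₀ a₁ b₁ : ℝ, ∀ θ : ℝ, p θ = a₀ + a₁ * Real.cos θ + b₁ * Real.sin θ) := by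
  have hπ : (0:ℝ) < 2 * Real.pi := by positivity
  have hit2 : iteratedDeriv 2 p = deriv (deriv p) := by
    rw [iteratedDeriv_succ, iteratedDeriv_one]
  rw [hit2] at hρdef hAt
  have hpoo : ContDiff ℝ (⊤:ℕ∞) p := hp.of_le (by simp)
  have h1 : ContDiff ℝ (⊤:ℕ∞) (deriv p) := by
    simpa using hpoo.iterate_deriv 1
  have h2 : ContDiff ℝ (⊤:ℕ∞) (deriv (deriv p)) := by
    simpa [Function.iterate_succ, Function.comp] using hpoo.iterate_deriv 2
  have hcp : Continuous p := hp.continuous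
  have hcp' : Continuous (deriv p) := h1.continuous
  have hcp'' : Continuous (deriv (deriv p)) := h2.continuous
  have hcρ : Continuous ρ := by rw [hρdef]; exact hcp.add hcp''
  have hcρinv : Continuous fun x => (ρ x)⁻¹ := hcρ.inv₀ fun x => (hρpos x).ne'
  have hc3 : Continuous fun x => 3 * ρ x - 2 * ρ x ^ 2 :=
    (continuous_const.mul hcρ).sub (continuous_const.mul (hcρ.pow 2))
  -- derivatives
  have hd1 : ∀ x : ℝ, HasDerivAt p (deriv p x) x :=
    fun x => (hp.differentiable (by simp) x).hasDerivAt
  have hd2 : ∀ x : ℝ, HasDerivAt (deriv p) (deriv (deriv p) x) x :=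
    fun x => (h1.differentiable (by simp) x).hasDerivAt
  -- periodicity of derivatives
  have hperD : ∀ (f : ℝ → ℝ), (∀ θ, f (θ + 2 * Real.pi) = f θ) →
      ∀ θ, deriv f (θ + 2 * Real.pi) = deriv f θ := by
    intro f hf θ
    have hfun : (fun x => f (x + 2 * Real.pi)) = f := funext hf
    rw [← deriv_comp_add_const, hfun]
  have hper' : ∀ θ, deriv p (θ + 2 * Real.pi) = deriv p θ := hperD p hper
  have hper'' : ∀ θ, deriv (deriv p) (θ + 2 * Real.pi) = deriv (deriv p) θ :=
    hperD (deriv p) hper'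
  -- integrability
  have ii : ∀ (f : ℝ → ℝ), Continuous f →
      IntervalIntegrable f volume 0 (2 * Real.pi) := fun f hf => hf.intervalIntegrable _ _
  -- integration by parts : ∫ p p'' = - ∫ p'^2
  have hparts : ∫ x in (0:ℝ)..(2 * Real.pi), p x * deriv (deriv p) x
      = - ∫ x in (0:ℝ)..(2 * Real.pi), deriv p x ^ 2 := by
    have H := intervalIntegral.integral_mul_deriv_eq_deriv_mul
      (u := p) (v := deriv p) (u' := deriv p) (v' := deriv (deriv p))
      (a := 0) (b := 2 * Real.pi)
      (fun x _ => hd1 x) (fun x _ => hd2 x) (ii _ hcp') (ii _ hcp'')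
    have e1 : p (2 * Real.pi) = p 0 := by simpa using hper 0
    have e2 : deriv p (2 * Real.pi) = deriv p 0 := by simpa using hper' 0
    rw [e1, e2] at H
    have e3 : ∫ x in (0:ℝ)..(2 * Real.pi), deriv p x * deriv p x
        = ∫ x in (0:ℝ)..(2 * Real.pi), deriv p x ^ 2 :=
      intervalIntegral.integral_congr fun x _ => by ring
    rw [e3] at H
    linarith [H]
  -- abbreviations for the integrals
  set I1 := ∫ x in (0:ℝ)..(2 * Real.pi), p x ^ 2 with hI1
  set I2 := ∫ x in (0:ℝ)..(2 * Real.pi), deriv p x ^ 2 with hI2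
  set I3 := ∫ x in (0:ℝ)..(2 * Real.pi), deriv (deriv p) x ^ 2 with hI3
  set I4 := ∫ x in (0:ℝ)..(2 * Real.pi), p x * deriv (deriv p) x with hI4
  have hAval : A = (1/2) * (I1 - I2) := by
    rw [hA, intervalIntegral.integral_sub (ii (fun x => p x ^ 2) (hcp.pow 2)) (ii (fun x => deriv p x ^ 2) (hcp'.pow 2))]
  have hAtval : Atilde = (1/2) * (I2 - I3) := by
    rw [hAt, intervalIntegral.integral_sub (ii (fun x => deriv p x ^ 2) (hcp'.pow 2)) (ii (fun x => deriv (deriv p) x ^ 2) (hcp''.pow 2))]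
  -- ∫ ρ^2 = I1 + 2 I4 + I3
  have hρsq : ∫ x in (0:ℝ)..(2 * Real.pi), ρ x ^ 2 = I1 + 2 * I4 + I3 := by
    have e : ∀ x ∈ Set.uIcc (0:ℝ) (2 * Real.pi),
        ρ x ^ 2 = p x ^ 2 + 2 * (p x * deriv (deriv p) x) + deriv (deriv p) x ^ 2 := by
      intro x _; rw [hρdef]; ring
    rw [intervalIntegral.integral_congr e,
      intervalIntegral.integral_add
        ((ii (fun x => p x ^ 2) (hcp.pow 2)).add ((ii (fun x => p x * deriv (deriv p) x) (hcp.mul hcp'')).const_mul 2))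
        (ii (fun x => deriv (deriv p) x ^ 2) (hcp''.pow 2)),
      intervalIntegral.integral_add (ii (fun x => p x ^ 2) (hcp.pow 2)) ((ii (fun x => p x * deriv (deriv p) x) (hcp.mul hcp'')).const_mul 2),
      intervalIntegral.integral_const_mul]
  have hkey : ∫ x in (0:ℝ)..(2 * Real.pi), (3 * ρ x - 2 * ρ x ^ 2)
      = 3 * L - 4 * A + 4 * Atilde := by
    rw [intervalIntegral.integral_sub ((ii _ hcρ).const_mul 3)
        ((ii (fun x => ρ x ^ 2) (hcρ.pow 2)).const_mul 2),
      intervalIntegral.integral_const_mul, intervalIntegral.integral_const_mul, hρsq, hL]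
    linarith [hAval, hAtval, hparts]
  -- pointwise inequality
  have hpt : ∀ x : ℝ, 3 * ρ x - 2 * ρ x ^ 2 ≤ (ρ x)⁻¹ := by
    intro x
    have hx := hρpos x
    rw [← sub_nonneg]
    have e : (ρ x)⁻¹ - (3 * ρ x - 2 * ρ x ^ 2) = (ρ x - 1) ^ 2 * (2 * ρ x + 1) / ρ x := by
      field_simp; ring
    rw [e]
    apply div_nonneg _ hx.le
    nlinarith [sq_nonneg (ρ x - 1)]
  have hineq2 : ∫ x in (0:ℝ)..(2 * Real.pi), (3 * ρ x - 2 * ρ x ^ 2)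
      ≤ ∫ x in (0:ℝ)..(2 * Real.pi), (ρ x)⁻¹ :=
    intervalIntegral.integral_mono_on hπ.le (ii _ hc3) (ii _ hcρinv) (fun x _ => hpt x)
  have habs : - |Atilde| ≤ Atilde := neg_abs_le _
  constructor
  · linarith [hkey, hineq2]
  · intro heq
    -- equality forces ∫ (ρ⁻¹ - (3ρ - 2ρ²)) = 0
    have hEq2 : ∫ x in (0:ℝ)..(2 * Real.pi), ((ρ x)⁻¹ - (3 * ρ x - 2 * ρ x ^ 2)) = 0 := by
      rw [intervalIntegral.integral_sub (ii _ hcρinv) (ii _ hc3)]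
      have : (∫ x in (0:ℝ)..(2 * Real.pi), (ρ x)⁻¹)
          ≤ ∫ x in (0:ℝ)..(2 * Real.pi), (3 * ρ x - 2 * ρ x ^ 2) := by
        rw [heq, hkey]; linarith
      linarith [hineq2]
    set g : ℝ → ℝ := fun x => (ρ x)⁻¹ - (3 * ρ x - 2 * ρ x ^ 2) with hg
    have hcg : Continuous g := hcρinv.sub hc3
    have hgnn : ∀ x, 0 ≤ g x := fun x => sub_nonneg.2 (hpt x)
    have hae : g =ᵐ[volume.restrict (Set.Ioc 0 (2 * Real.pi))] 0 :=
      (intervalIntegral.integral_eq_zero_iff_of_le_of_nonneg_ae hπ.le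
        (Filter.Eventually.of_forall fun x => hgnn x) (ii _ hcg)).mp hEq2
    -- g vanishes on the open interval
    have hIoo : ∀ x ∈ Set.Ioo (0:ℝ) (2 * Real.pi), g x = 0 := by
      intro x hx
      by_contra hne
      have hgx : 0 < g x := lt_of_le_of_ne (hgnn x) (Ne.symm hne)
      have hUopen : IsOpen ({y | 0 < g y} ∩ Set.Ioo 0 (2 * Real.pi)) :=
        (isOpen_lt continuous_const hcg).inter isOpen_Ioo
      have hUne : ({y | 0 < g y} ∩ Set.Ioo 0 (2 * Real.pi)).Nonempty := ⟨x, hgx, hx⟩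
      have hpos := hUopen.measure_pos volume hUne
      have hnull : volume ({y | g y ≠ 0} ∩ Set.Ioc 0 (2 * Real.pi)) = 0 := by
        have := ae_iff.mp hae
        rwa [Measure.restrict_apply₀'] at this
        · exact measurableSet_Ioc.nullMeasurableSet
      have hsub : {y | 0 < g y} ∩ Set.Ioo 0 (2 * Real.pi)
          ⊆ {y | g y ≠ 0} ∩ Set.Ioc 0 (2 * Real.pi) := fun y hy =>
        ⟨ne_of_gt hy.1, Set.Ioo_subset_Ioc_self hy.2⟩
      exact absurd (measure_mono_null hsub hnull) (ne_of_gt hpos)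
    -- extend to the closed interval by continuity
    have hIcc : ∀ x ∈ Set.Icc (0:ℝ) (2 * Real.pi), g x = 0 := by
      have hcl : Set.EqOn g 0 (closure (Set.Ioo (0:ℝ) (2 * Real.pi))) :=
        Set.EqOn.closure (fun x hx => hIoo x hx) hcg continuous_const
      intro x hx
      have := hcl (by rw [closure_Ioo hπ.ne]; exact hx)
      simpa using this
    -- hence ρ = 1 on [0, 2π]
    have hρ1 : ∀ x ∈ Set.Icc (0:ℝ) (2 * Real.pi), ρ x = 1 := by
      intro x hx
      have hgx : g x = 0 := hIcc x hx
      have hxpos := hρpos x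
      have h1' : (ρ x)⁻¹ = 3 * ρ x - 2 * ρ x ^ 2 := by
        have : (ρ x)⁻¹ - (3 * ρ x - 2 * ρ x ^ 2) = 0 := hgx
        linarith
      have h2' : 1 = (3 * ρ x - 2 * ρ x ^ 2) * ρ x := by
        rw [← h1']; field_simp
      have h3' : (ρ x - 1) ^ 2 * (2 * ρ x + 1) = 0 := by linear_combination h2'
      rcases mul_eq_zero.mp h3' with h | h
      · have := pow_eq_zero_iff (n := 2) (by norm_num) |>.mp h
        linarith
      · linarith
    -- ρ is periodic, so ρ = 1 everywhere
    have hρper : Function.Periodic ρ (2 * Real.pi) := by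
      intro θ; rw [hρdef]; simp only; rw [hper θ, hper'' θ]
    have hρ1' : ∀ θ : ℝ, ρ θ = 1 := by
      intro θ
      obtain ⟨y, hy, hxy⟩ := hρper.exists_mem_Ico₀ hπ θ
      rw [hxy]
      exact hρ1 y ⟨hy.1, hy.2.le⟩
    -- the ODE p'' = 1 - p
    have hODE : ∀ θ : ℝ, deriv (deriv p) θ = 1 - p θ := by
      intro θ
      have := hρ1' θ
      rw [hρdef] at this
      simp only at this
      linarith
    -- constants of motion
    set a : ℝ → ℝ := fun θ => (p θ - 1) * Real.cos θ - deriv p θ * Real.sin θ with ha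
    set b : ℝ → ℝ := fun θ => (p θ - 1) * Real.sin θ + deriv p θ * Real.cos θ with hb
    have hda : ∀ θ : ℝ, HasDerivAt a 0 θ := by
      intro θ
      have H := (((hd1 θ).sub_const 1).mul (Real.hasDerivAt_cos θ)).sub
        ((hd2 θ).mul (Real.hasDerivAt_sin θ))
      refine H.congr_deriv ?_
      rw [hODE θ]; ring
    have hdb : ∀ θ : ℝ, HasDerivAt b 0 θ := by
      intro θ
      have H := (((hd1 θ).sub_const 1).mul (Real.hasDerivAt_sin θ)).add
        ((hd2 θ).mul (Real.hasDerivAt_cos θ))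
      refine H.congr_deriv ?_
      rw [hODE θ]; ring
    have haconst : ∀ θ : ℝ, a θ = a 0 :=
      fun θ => is_const_of_deriv_eq_zero (fun x => (hda x).differentiableAt)
        (fun x => (hda x).deriv) θ 0
    have hbconst : ∀ θ : ℝ, b θ = b 0 :=
      fun θ => is_const_of_deriv_eq_zero (fun x => (hdb x).differentiableAt)
        (fun x => (hdb x).deriv) θ 0
    refine ⟨1, p 0 - 1, deriv p 0, fun θ => ?_⟩
    have ha0 : a 0 = p 0 - 1 := by simp [ha]
    have hb0 : b 0 = deriv p 0 := by simp [hb]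
    have hA' : (p θ - 1) * Real.cos θ - deriv p θ * Real.sin θ = p 0 - 1 := by
      rw [← ha0]; exact haconst θ
    have hB' : (p θ - 1) * Real.sin θ + deriv p θ * Real.cos θ = deriv p 0 := by
      rw [← hb0]; exact hbconst θ
    have hpyth := Real.sin_sq_add_cos_sq θ
    linear_combination Real.cos θ * hA' + Real.sin θ * hB' - (p θ - 1) * hpyth
end
end

section
/- One has the strict inequality 2L² + 8|Ã| + 2∫₀^{2π} ρ_β(θ)² dθ + ∫₀^{2π} ρ(θ)⁻¹ dθ > 20A. -/
open MeasureTheory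

noncomputable section

open scoped ContDiff

namespace Stmt15Aux

open MeasureTheory Complex intervalIntegral AddCircle

lemma hT0 : (0:ℝ) < 2 * Real.pi := by positivity

instance : Fact ((0:ℝ) < 2 * Real.pi) := ⟨hT0⟩

lemma coeff_formula {f : ℝ → ℂ} (hper : Function.Periodic f (2 * Real.pi)) (n : ℤ) :
    fourierCoeff hper.lift n
      = (1 / (2 * Real.pi) : ℝ) • ∫ x in (0:ℝ)..(2 * Real.pi),
          fourier (-n) (x : AddCircle (2 * Real.pi)) * f x := by
  rw [fourierCoeff_eq_intervalIntegral _ n 0]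
  simp only [zero_add, smul_eq_mul]
  congr 1

lemma coeff_norm_le {f f' : ℝ → ℂ} (hper : Function.Periodic f (2 * Real.pi))
    (hper' : Function.Periodic f' (2 * Real.pi))
    (hderiv : ∀ x, HasDerivAt f (f' x) x) (hcont' : Continuous f')
    (hmean : (∫ x in (0:ℝ)..(2 * Real.pi), f x) = 0) (n : ℤ)
    (hrel : n ≠ 0 → (∫ x in (0:ℝ)..(2 * Real.pi), fourier (-n) (x : AddCircle (2 * Real.pi)) * f x)
      = -(((2 * Real.pi : ℝ) : ℂ) / (-2 * (Real.pi : ℂ) * Complex.I * n))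
        * ∫ x in (0:ℝ)..(2 * Real.pi), fourier (-n) (x : AddCircle (2 * Real.pi)) * f' x) :
    ‖fourierCoeff hper.lift n‖ ≤ ‖fourierCoeff hper'.lift n‖ := by
  rcases eq_or_ne n 0 with h0 | hn
  · subst h0
    rw [coeff_formula]
    simp [hmean]
  · rw [coeff_formula, coeff_formula, hrel hn]
    rw [norm_smul, norm_smul, norm_mul, norm_neg]
    have hd : ‖(-2 * (Real.pi : ℂ) * Complex.I * (n:ℂ))‖ = 2 * Real.pi * |(n:ℝ)| := by
      simp [norm_mul, abs_of_pos Real.pi_pos]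
    have hnn : (1:ℝ) ≤ |(n:ℝ)| := by
      rw [← Int.cast_abs]
      exact_mod_cast Int.one_le_abs hn
    have hc : ‖(((2 * Real.pi : ℝ) : ℂ) / (-2 * (Real.pi : ℂ) * Complex.I * n))‖ ≤ 1 := by
      rw [norm_div, hd, div_le_one (by positivity)]
      calc ‖((2 * Real.pi : ℝ) : ℂ)‖ = 2 * Real.pi := by
            rw [Complex.norm_real, Real.norm_eq_abs, abs_of_pos hT0]
        _ ≤ 2 * Real.pi * |(n:ℝ)| := by nlinarith [Real.pi_pos]
    have h1 : ‖(((2 * Real.pi : ℝ) : ℂ) / (-2 * (Real.pi : ℂ) * Complex.I * n))‖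
        * ‖∫ x in (0:ℝ)..(2 * Real.pi), fourier (-n) (x : AddCircle (2 * Real.pi)) * f' x‖
        ≤ ‖∫ x in (0:ℝ)..(2 * Real.pi), fourier (-n) (x : AddCircle (2 * Real.pi)) * f' x‖ := by
      nlinarith [norm_nonneg (∫ x in (0:ℝ)..(2 * Real.pi), fourier (-n) (x : AddCircle (2 * Real.pi)) * f' x), norm_nonneg (((2 * Real.pi : ℝ) : ℂ) / (-2 * (Real.pi : ℂ) * Complex.I * n))]
    have h2 : (0:ℝ) ≤ ‖(1 / (2 * Real.pi) : ℝ)‖ := norm_nonneg _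
    exact mul_le_mul_of_nonneg_left h1 h2

lemma haar_int {f : ℝ → ℂ} (hper : Function.Periodic f (2 * Real.pi)) :
    ∫ t : AddCircle (2 * Real.pi), ‖hper.lift t‖^2 ∂haarAddCircle
      = (2 * Real.pi)⁻¹ * ∫ x in (0:ℝ)..(2 * Real.pi), ‖f x‖^2 := by
  have h1 := AddCircle.intervalIntegral_preimage (2 * Real.pi) 0
      (fun t : AddCircle (2 * Real.pi) => ‖hper.lift t‖^2)
  rw [zero_add] at h1
  have h2 : (∫ b : AddCircle (2 * Real.pi), ‖hper.lift b‖^2)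
      = (2 * Real.pi) * ∫ b, ‖hper.lift b‖^2 ∂haarAddCircle := by
    rw [AddCircle.volume_eq_smul_haarAddCircle, MeasureTheory.integral_smul_measure,
      ENNReal.toReal_ofReal hT0.le, smul_eq_mul]
  have h3 : (∫ x in (0:ℝ)..(2 * Real.pi), ‖hper.lift (x : AddCircle (2 * Real.pi))‖^2)
      = ∫ x in (0:ℝ)..(2 * Real.pi), ‖f x‖^2 := rfl
  rw [h3, h2] at h1
  rw [h1]
  field_simp



lemma parseval (F : C(AddCircle (2 * Real.pi), ℂ)) :
    Summable (fun n : ℤ => ‖fourierCoeff (F : AddCircle (2 * Real.pi) → ℂ) n‖ ^ 2) ∧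
    ∑' n : ℤ, ‖fourierCoeff (F : AddCircle (2 * Real.pi) → ℂ) n‖ ^ 2
      = ∫ t : AddCircle (2 * Real.pi), ‖F t‖ ^ 2 ∂haarAddCircle := by
  have h1 := tsum_sq_fourierCoeff (ContinuousMap.toLp 2 haarAddCircle ℂ F)
  simp_rw [fourierCoeff_toLp] at h1
  constructor
  · have hm := lp.memℓp ((@fourierBasis (2 * Real.pi) _).repr
      (ContinuousMap.toLp 2 haarAddCircle ℂ F))
    have hs := hm.summable (by norm_num)
    simp_rw [fourierBasis_repr, fourierCoeff_toLp] at hs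
    convert hs using 2 with n
    rw [← Real.rpow_natCast]
    norm_num
  · rw [h1]
    apply MeasureTheory.integral_congr_ae
    filter_upwards [ContinuousMap.coeFn_toLp (𝕜 := ℂ) (p := 2) (μ := haarAddCircle) F] with t ht
    rw [ht]

lemma lift_continuous {f : ℝ → ℂ} (hf : Continuous f)
    (hper : Function.Periodic f (2 * Real.pi)) : Continuous hper.lift := by
  rw [isQuotientMap_quotient_mk'.continuous_iff]
  convert hf using 1
  rfl

lemma coeff_rel {f f' : ℝ → ℂ} (hper : Function.Periodic f (2 * Real.pi))
    (hderiv : ∀ x, HasDerivAt f (f' x) x) (hcont' : Continuous f')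
    {n : ℤ} (hn : n ≠ 0) :
    (∫ x in (0:ℝ)..(2 * Real.pi), fourier (-n) (x : AddCircle (2 * Real.pi)) * f x)
      = -(((2 * Real.pi : ℝ) : ℂ) / (-2 * (Real.pi : ℂ) * Complex.I * n))
        * ∫ x in (0:ℝ)..(2 * Real.pi), fourier (-n) (x : AddCircle (2 * Real.pi)) * f' x := by
  set c : ℂ := ((2 * Real.pi : ℝ) : ℂ) / (-2 * (Real.pi : ℂ) * Complex.I * n) with hc
  have hu : ∀ x ∈ Set.uIcc (0:ℝ) (2 * Real.pi),
      HasDerivAt (fun y : ℝ => c * fourier (-n) (y : AddCircle (2 * Real.pi)))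
        (fourier (-n) (x : AddCircle (2 * Real.pi))) x :=
    fun x _ => has_antideriv_at_fourier_neg ⟨hT0⟩ hn x
  have hv : ∀ x ∈ Set.uIcc (0:ℝ) (2 * Real.pi), HasDerivAt f (f' x) x := fun x _ => hderiv x
  have hic : IntervalIntegrable (fun x : ℝ => fourier (-n) (x : AddCircle (2 * Real.pi)))
      volume 0 (2 * Real.pi) :=
    (Continuous.intervalIntegrable (by continuity) _ _)
  have hif' : IntervalIntegrable f' volume 0 (2 * Real.pi) := hcont'.intervalIntegrable _ _
  have parts := intervalIntegral.integral_mul_deriv_eq_deriv_mul hu hv hic hif'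
  have hb1 : f (2 * Real.pi) = f 0 := by simpa using hper 0
  have hb2 : ((2 * Real.pi : ℝ) : AddCircle (2 * Real.pi)) = ((0:ℝ) : AddCircle (2 * Real.pi)) := by
    simp [AddCircle.coe_period]
  rw [hb1, hb2] at parts
  have hmul : (∫ x in (0:ℝ)..(2 * Real.pi),
      (c * fourier (-n) (x : AddCircle (2 * Real.pi))) * f' x)
      = c * ∫ x in (0:ℝ)..(2 * Real.pi), fourier (-n) (x : AddCircle (2 * Real.pi)) * f' x := by
    rw [← intervalIntegral.integral_const_mul]
    congr 1
    ext x
    ring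
  rw [hmul] at parts
  linear_combination parts

lemma wirtinger {g : ℝ → ℝ} (hg : ContDiff ℝ (⊤ : ℕ∞) g)
    (hper : Function.Periodic g (2 * Real.pi))
    (hmean : (∫ θ in (0:ℝ)..(2 * Real.pi), g θ) = 0) :
    (∫ θ in (0:ℝ)..(2 * Real.pi), g θ ^ 2) ≤ ∫ θ in (0:ℝ)..(2 * Real.pi), deriv g θ ^ 2 := by
  have hgd : Differentiable ℝ g := hg.differentiable (by simp)
  have hdg : Continuous (deriv g) := hg.continuous_deriv (by simp)
  have hperd : Function.Periodic (deriv g) (2 * Real.pi) := by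
    intro x
    have h : deriv (fun y => g (y + 2 * Real.pi)) x = deriv g x := by
      congr 1
      ext y
      exact hper y
    rw [← h, deriv_comp_add_const]
  set f : ℝ → ℂ := fun x => (g x : ℂ) with hf
  set f' : ℝ → ℂ := fun x => Complex.ofReal (deriv g x) with hf'
  have hfc : Continuous f := Complex.continuous_ofReal.comp hg.continuous
  have hfc' : Continuous f' := Complex.continuous_ofReal.comp hdg
  have hfper : Function.Periodic f (2 * Real.pi) := fun x => by simp [hf, hper x]
  have hfper' : Function.Periodic f' (2 * Real.pi) := fun x => by simp [hf', hperd x]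
  have hD : ∀ x, HasDerivAt f (f' x) x := fun x => ((hgd x).hasDerivAt).ofReal_comp
  have hfmean : (∫ x in (0:ℝ)..(2 * Real.pi), f x) = 0 := by
    rw [hf, intervalIntegral.integral_ofReal, hmean]
    simp
  set CF : C(AddCircle (2 * Real.pi), ℂ) := ⟨hfper.lift, lift_continuous hfc hfper⟩ with hCF
  set CF' : C(AddCircle (2 * Real.pi), ℂ) := ⟨hfper'.lift, lift_continuous hfc' hfper'⟩ with hCF'
  obtain ⟨hs1, he1⟩ := parseval CF
  obtain ⟨hs2, he2⟩ := parseval CF'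
  have hterm : ∀ n : ℤ, ‖fourierCoeff (CF : AddCircle (2 * Real.pi) → ℂ) n‖ ^ 2
      ≤ ‖fourierCoeff (CF' : AddCircle (2 * Real.pi) → ℂ) n‖ ^ 2 := by
    intro n
    have hb : ‖fourierCoeff hfper.lift n‖ ≤ ‖fourierCoeff hfper'.lift n‖ :=
      coeff_norm_le hfper hfper' hD hfc' hfmean n (fun hn => coeff_rel hfper hD hfc' hn)
    have : ‖fourierCoeff (CF : AddCircle (2 * Real.pi) → ℂ) n‖
        ≤ ‖fourierCoeff (CF' : AddCircle (2 * Real.pi) → ℂ) n‖ := hb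
    exact pow_le_pow_left₀ (norm_nonneg _) this 2
  have hsum := Summable.tsum_le_tsum hterm hs1 hs2
  rw [he1, he2] at hsum
  have hI1 : ∫ t : AddCircle (2 * Real.pi), ‖CF t‖ ^ 2 ∂haarAddCircle
      = (2 * Real.pi)⁻¹ * ∫ x in (0:ℝ)..(2 * Real.pi), ‖f x‖ ^ 2 := haar_int hfper
  have hI2 : ∫ t : AddCircle (2 * Real.pi), ‖CF' t‖ ^ 2 ∂haarAddCircle
      = (2 * Real.pi)⁻¹ * ∫ x in (0:ℝ)..(2 * Real.pi), ‖f' x‖ ^ 2 := haar_int hfper'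
  rw [hI1, hI2] at hsum
  have hn1 : (∫ x in (0:ℝ)..(2 * Real.pi), ‖f x‖ ^ 2) = ∫ θ in (0:ℝ)..(2 * Real.pi), g θ ^ 2 := by
    apply intervalIntegral.integral_congr
    intro x _
    simp [hf, Complex.norm_real, sq_abs]
  have hn2 : (∫ x in (0:ℝ)..(2 * Real.pi), ‖f' x‖ ^ 2)
      = ∫ θ in (0:ℝ)..(2 * Real.pi), deriv g θ ^ 2 := by
    apply intervalIntegral.integral_congr
    intro x _
    simp [hf', Complex.norm_real, sq_abs]
  rw [hn1, hn2] at hsum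
  have hpos : (0:ℝ) < (2 * Real.pi)⁻¹ := by positivity
  exact le_of_mul_le_mul_left hsum hpos

end Stmt15Aux

open Stmt15Aux in
theorem stmt15
    (p : ℝ → ℝ)
    (hp : ContDiff ℝ (⊤ : ℕ∞) p)
    (hper : ∀ θ : ℝ, p (θ + 2 * Real.pi) = p θ)
    (ρ : ℝ → ℝ)
    (hρdef : ρ = fun θ => p θ + iteratedDeriv 2 p θ)
    (hρpos : ∀ θ : ℝ, 0 < ρ θ)
    (L A : ℝ)
    (hL : L = ∫ θ in (0:ℝ)..(2 * Real.pi), ρ θ)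
    (hA : A = (1 / 2) * ∫ θ in (0:ℝ)..(2 * Real.pi), (p θ ^ 2 - deriv p θ ^ 2))
    (Atilde : ℝ)
    (hAt : Atilde = (1 / 2) * ∫ θ in (0:ℝ)..(2 * Real.pi), (deriv p θ ^ 2 - iteratedDeriv 2 p θ ^ 2))
    (ρβ : ℝ → ℝ)
    (hρβ : ρβ = fun θ => |deriv p θ + iteratedDeriv 3 p θ|)
    :
    20 * A < 2 * L ^ 2 + 8 * |Atilde| + 2 * (∫ θ in (0:ℝ)..(2 * Real.pi), ρβ θ ^ 2)
      + (∫ θ in (0:ℝ)..(2 * Real.pi), (ρ θ)⁻¹) := by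
  have hpi : (3.141592:ℝ) < Real.pi := Real.pi_gt_d6
  -- smoothness bookkeeping
  have hpinf : ContDiff ℝ (∞ : WithTop ℕ∞) p := hp.of_le (by simp)
  have hdp : ContDiff ℝ (∞ : WithTop ℕ∞) (deriv p) := (contDiff_infty_iff_deriv.mp hpinf).2
  have hpc : Continuous p := hp.continuous
  have hdpc : Continuous (deriv p) := hdp.continuous
  have hd2 : iteratedDeriv 2 p = deriv (deriv p) := by
    rw [iteratedDeriv_succ, iteratedDeriv_one]
  have hd2c : Continuous (iteratedDeriv 2 p) := by
    rw [hd2]; exact hdp.continuous_deriv (by exact_mod_cast le_top)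
  have hρc : Continuous ρ := by rw [hρdef]; exact hpc.add hd2c
  -- periodicity of deriv p
  have hperp : Function.Periodic p (2 * Real.pi) := hper
  have hperd : Function.Periodic (deriv p) (2 * Real.pi) := by
    intro x
    have h : deriv (fun y => p (y + 2 * Real.pi)) x = deriv p x := by
      congr 1; ext y; exact hper y
    rw [← h, deriv_comp_add_const]
  -- ∫ p'' = 0
  have hint2 : (∫ θ in (0:ℝ)..(2 * Real.pi), iteratedDeriv 2 p θ) = 0 := by
    rw [hd2]
    rw [intervalIntegral.integral_deriv_eq_sub (fun x _ => (hdp.differentiable (by simp)) x)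
      ((hdp.continuous_deriv (by exact_mod_cast le_top)).intervalIntegrable _ _)]
    have := hperd 0
    rw [zero_add] at this
    rw [this]
    ring
  -- L = ∫ p
  have hLp : L = ∫ θ in (0:ℝ)..(2 * Real.pi), p θ := by
    rw [hL, hρdef]
    rw [intervalIntegral.integral_add (hpc.intervalIntegrable _ _) (hd2c.intervalIntegrable _ _),
      hint2, add_zero]
  have hL0 : 0 < L := by
    rw [hL]
    exact intervalIntegral.intervalIntegral_pos_of_pos (hρc.intervalIntegrable _ _) hρpos hT0
  -- set up q
  set c : ℝ := L / (2 * Real.pi) with hc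
  set q : ℝ → ℝ := fun θ => p θ - c with hqdef
  have hq : ContDiff ℝ (⊤ : ℕ∞) q := hp.sub contDiff_const
  have hqper : Function.Periodic q (2 * Real.pi) := fun x => by simp [hqdef, hper x]
  have hdq : deriv q = deriv p := by
    ext x
    rw [hqdef]
    exact deriv_sub_const _
  have hqmean : (∫ θ in (0:ℝ)..(2 * Real.pi), q θ) = 0 := by
    rw [hqdef]
    rw [intervalIntegral.integral_sub (hpc.intervalIntegrable _ _)
      (intervalIntegrable_const)]
    rw [intervalIntegral.integral_const, ← hLp]
    simp [hc]
    field_simp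
    ring
  have hqsq : (∫ θ in (0:ℝ)..(2 * Real.pi), q θ ^ 2)
      = (∫ θ in (0:ℝ)..(2 * Real.pi), p θ ^ 2) - L ^ 2 / (2 * Real.pi) := by
    have he : ∀ θ : ℝ, q θ ^ 2 = p θ ^ 2 - (2 * c * p θ - c ^ 2) := by
      intro θ; rw [hqdef]; ring
    rw [intervalIntegral.integral_congr (g := fun θ => p θ ^ 2 - (2 * c * p θ - c ^ 2))
      (fun θ _ => he θ)]
    rw [intervalIntegral.integral_sub (f := fun x => p x ^ 2) (g := fun x => 2 * c * p x - c ^ 2) ((hpc.pow 2).intervalIntegrable _ _)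
      (((continuous_const.mul hpc).sub continuous_const).intervalIntegrable _ _)]
    rw [intervalIntegral.integral_sub (f := fun x => 2 * c * p x) (g := fun _ => c ^ 2) ((continuous_const.mul hpc).intervalIntegrable _ _)
      intervalIntegrable_const]
    rw [intervalIntegral.integral_const_mul, ← hLp, intervalIntegral.integral_const]
    have h2π : (2 * Real.pi) ≠ 0 := ne_of_gt hT0
    have hπ0 : Real.pi ≠ 0 := Real.pi_ne_zero
    rw [hc]
    field_simp
    have hππ : Real.pi ^ 2 * Real.pi⁻¹ ^ 2 = 1 := by rw [← mul_pow, mul_inv_cancel₀ hπ0, one_pow]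
    linear_combination L ^ 2 * hππ
  have hw := wirtinger hq hqper hqmean
  rw [hdq, hqsq] at hw
  -- 20 A = 10 (a - b)
  have hA20 : 20 * A = 10 * ((∫ θ in (0:ℝ)..(2 * Real.pi), p θ ^ 2)
      - ∫ θ in (0:ℝ)..(2 * Real.pi), deriv p θ ^ 2) := by
    rw [hA, intervalIntegral.integral_sub (f := fun θ => p θ ^ 2) (g := fun θ => deriv p θ ^ 2) ((hpc.pow 2).intervalIntegrable _ _)
      ((hdpc.pow 2).intervalIntegrable _ _)]
    ring
  -- nonnegative garbage
  have hAt0 : 0 ≤ |Atilde| := abs_nonneg _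
  have hρβ0 : 0 ≤ ∫ θ in (0:ℝ)..(2 * Real.pi), ρβ θ ^ 2 :=
    intervalIntegral.integral_nonneg hT0.le (fun x _ => sq_nonneg _)
  have hρinv0 : 0 ≤ ∫ θ in (0:ℝ)..(2 * Real.pi), (ρ θ)⁻¹ :=
    intervalIntegral.integral_nonneg hT0.le (fun x _ => (inv_nonneg.mpr (hρpos x).le))
  -- final arithmetic
  have hD : L ^ 2 / (2 * Real.pi) * (2 * Real.pi) = L ^ 2 :=
    div_mul_cancel₀ _ (ne_of_gt hT0)
  have hDpos : 0 < L ^ 2 / (2 * Real.pi) := by positivity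
  nlinarith [mul_pos hDpos hT0, hw, hA20]
end
end
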